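/- If X ∈ gl_N(ℂ) satisfies K X^t K^{−1} = −X, then for every k = 1,…,L one has [Σ_{ℓ=1}^L X^{(ℓ)}, H_k^η] = 0; i.e. the outer-twisted Gaudin model has the Lie algebra {X ∈ gl_N(ℂ) : K X^t K^{−1} = −X} (isomorphic to so(p,q) for η = +1 and to sp(N) for η = −1) as a symmetry algebra. -/

import Mathlib

/-!
Write `S = ∑ ℓ, X^{(ℓ)}`. Since each `ρ ℓ` preserves commutators and operators on different
sites commute, `[S, M^{(ℓ)}] = [X, M]^{(ℓ)}` for every matrix `M`. Both `tr_a(𝐏_{ak} 𝐏_{aj})`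
and `tr_a(𝐏_{ak} 𝐐_{aj})` have the form `∑ p q, α (E_{pq}) * β (E_{qp})` for linear maps `α, β`
that turn `[X, ·]` into `[S, ·]`: for the first one `α = (·)^{(k)}`, `β = (·)^{(j)}`; for the
second one `β` is precomposed with `M ↦ Kᵀ Mᵀ (Kᵀ)⁻¹`, an anti-automorphism of the matrix
algebra that is inverse to `M ↦ K Mᵀ K⁻¹` and hence sends `X` to `-X`, so it commutes with
`[X, ·]`. The Casimir tensor `∑ p q, E_{pq} ⊗ E_{qp}` is `gl_N`-invariant, so the commutator
with `S`, `∑ p q, α [X, E_{pq}] * β E_{qp} + α E_{pq} * β [X, E_{qp}]`, vanishes. `H_k^η` is a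
linear combination of such traces.
-/

open Matrix
open scoped TensorProduct

noncomputable section

variable {N L : ℕ}
variable {V : Fin L → Type} [∀ ℓ, AddCommGroup (V ℓ)] [∀ ℓ, Module ℂ (V ℓ)]
variable (ρ : ∀ ℓ, Matrix (Fin N) (Fin N) ℂ →ₗ[ℂ] Module.End ℂ (V ℓ))

/-- The operator `X^{(ℓ)}` on `W = ⨂_ℓ V ℓ`, acting as `ρ ℓ X` in the `ℓ`-th tensor
factor and as the identity elsewhere. -/
def siteOp (ℓ : Fin L) (X : Matrix (Fin N) (Fin N) ℂ) :
    Module.End ℂ (⨂[ℂ] i, V i) :=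
  PiTensorProduct.map (Function.update (fun i => (LinearMap.id : V i →ₗ[ℂ] V i)) ℓ (ρ ℓ X))

/-- The matrix `𝐏_{aℓ}` over `End W`, whose `(i,j)` entry is `(E_{ji})^{(ℓ)}`. -/
def Pm (ℓ : Fin L) : Matrix (Fin N) (Fin N) (Module.End ℂ (⨂[ℂ] i, V i)) :=
  Matrix.of fun i j => siteOp ρ ℓ (Matrix.single j i 1)

/-- `T_a(u) = Σ_ℓ (u − z_ℓ)⁻¹ 𝐏_{aℓ}`. -/
def Tm (z : Fin L → ℂ) (u : ℂ) : Matrix (Fin N) (Fin N) (Module.End ℂ (⨂[ℂ] i, V i)) :=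
  ∑ ℓ : Fin L, (u - z ℓ)⁻¹ • Pm ρ ℓ

/-- A scalar `N×N` matrix viewed as a matrix over `End W`. -/
def emb (V : Fin L → Type) [∀ ℓ, AddCommGroup (V ℓ)] [∀ ℓ, Module ℂ (V ℓ)]
    (M : Matrix (Fin N) (Fin N) ℂ) :
    Matrix (Fin N) (Fin N) (Module.End ℂ (⨂[ℂ] i, V i)) :=
  M.map (algebraMap ℂ (Module.End ℂ (⨂[ℂ] i, V i)))

/-- `S_a(u) = T_a(u) + K T_a(−u)^{t_a} K⁻¹`. -/
def Sm (z : Fin L → ℂ) (K : Matrix (Fin N) (Fin N) ℂ) (u : ℂ) :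
    Matrix (Fin N) (Fin N) (Module.End ℂ (⨂[ℂ] i, V i)) :=
  Tm ρ z u + emb V K * (Tm ρ z (-u))ᵀ * emb V K⁻¹

/-- `M_a = M ⊗ 1` as an `N²×N²` matrix. -/
def aM {A : Type} [Zero A] (M : Matrix (Fin N) (Fin N) A) :
    Matrix (Fin N × Fin N) (Fin N × Fin N) A :=
  Matrix.of fun p q => if p.2 = q.2 then M p.1 q.1 else 0

/-- `M_b = 1 ⊗ M` as an `N²×N²` matrix. -/
def bM {A : Type} [Zero A] (M : Matrix (Fin N) (Fin N) A) :
    Matrix (Fin N × Fin N) (Fin N × Fin N) A :=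
  Matrix.of fun p q => if p.1 = q.1 then M p.2 q.2 else 0

/-- The permutation matrix `P_{ab} = Σ_{ij} E_{ij} ⊗ E_{ji}`. -/
def PP (N : ℕ) (A : Type) [Zero A] [One A] :
    Matrix (Fin N × Fin N) (Fin N × Fin N) A :=
  Matrix.of fun p q => if p.1 = q.2 ∧ p.2 = q.1 then 1 else 0

/-- Partial transposition `t_a` in the first auxiliary factor of an `N²×N²` matrix. -/
def ptA {A : Type} (M : Matrix (Fin N × Fin N) (Fin N × Fin N) A) :
    Matrix (Fin N × Fin N) (Fin N × Fin N) A :=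
  Matrix.of fun p q => M (q.1, p.2) (p.1, q.2)

/-- Partial transposition `t_b` in the second auxiliary factor of an `N²×N²` matrix. -/
def ptB {A : Type} (M : Matrix (Fin N × Fin N) (Fin N × Fin N) A) :
    Matrix (Fin N × Fin N) (Fin N × Fin N) A :=
  Matrix.of fun p q => M (p.1, q.2) (q.1, p.2)

/-- `𝐐_{aℓ} = K 𝐏_{aℓ}^{t_a} K⁻¹`. -/
def Qm (K : Matrix (Fin N) (Fin N) ℂ) (ℓ : Fin L) :
    Matrix (Fin N) (Fin N) (Module.End ℂ (⨂[ℂ] i, V i)) :=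
  emb V K * (Pm ρ ℓ)ᵀ * emb V K⁻¹

/-- The outer-twisted Gaudin Hamiltonian
`H_k^η = Σ_{j≠k} [(z_k−z_j)⁻¹ tr_a(𝐏_{ak}𝐏_{aj}) + (z_k+z_j)⁻¹ tr_a(𝐏_{ak}𝐐_{aj})]
  + (2z_k)⁻¹ tr_a(𝐏_{ak}𝐐_{ak})`. -/
def Hout (z : Fin L → ℂ) (K : Matrix (Fin N) (Fin N) ℂ) (k : Fin L) :
    Module.End ℂ (⨂[ℂ] i, V i) :=
  (∑ j ∈ Finset.univ.filter (fun j => j ≠ k),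
      ((z k - z j)⁻¹ • (Pm ρ k * Pm ρ j).trace
        + (z k + z j)⁻¹ • (Pm ρ k * Qm ρ K j).trace))
    + (2 * z k)⁻¹ • (Pm ρ k * Qm ρ K k).trace

namespace PiTensorProduct

variable {ι R : Type*} [CommSemiring R] [DecidableEq ι] {s : ι → Type*}
  [∀ i, AddCommMonoid (s i)] [∀ i, Module R (s i)]

variable (R s) in
def mapAt (i : ι) : Module.End R (s i) →ₐ[R] Module.End R (⨂[R] i, s i) :=
  AlgHom.ofLinearMap ((mapMultilinear R s s).toLinearMap 1 i)
    (by change map (Pi.mulSingle i 1) = 1; rw [Pi.mulSingle_one]; exact PiTensorProduct.map_one)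
    (fun f g => by
      change map (Pi.mulSingle i (f * g)) = map (Pi.mulSingle i f) * map (Pi.mulSingle i g)
      rw [Pi.mulSingle_mul, ← PiTensorProduct.map_mul]; rfl)

theorem mapAt_apply (i : ι) (f : Module.End R (s i)) :
    mapAt R s i f = map (Pi.mulSingle i f) := rfl

theorem commute_mapAt {i j : ι} (h : i ≠ j) (f : Module.End R (s i)) (g : Module.End R (s j)) :
    Commute (mapAt R s i f) (mapAt R s j g) := by
  have h' := Pi.mulSingle_commute (f := fun i => Module.End R (s i)) h f g
  exact h'.map mapMonoidHom

end PiTensorProduct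

namespace Matrix

variable {n R : Type*} [Fintype n] [DecidableEq n] [CommRing R]

section Casimir

variable {E : Type*} [AddCommGroup E] [Module R E] (B : Matrix n n R →ₗ[R] Matrix n n R →ₗ[R] E)

theorem sum_bilin_mul_single (Y : Matrix n n R) :
    ∑ p, ∑ q, B (Y * single p q 1) (single q p 1)
      = ∑ p, ∑ q, B (single p q 1) (single q p 1 * Y) := by
  induction Y using Matrix.induction_on' with
  | h_zero => simp
  | h_add Y Z hY hZ => simp [add_mul, mul_add, Finset.sum_add_distrib, hY, hZ]
  | h_std_basis a b c =>
    rw [show single a b c = c • single a b 1 by rw [smul_single, smul_eq_mul, mul_one]]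
    simp only [Matrix.smul_mul, Matrix.mul_smul, map_smul, LinearMap.smul_apply,
      ← Finset.smul_sum]
    congr 1
    -- both sides collapse to `∑ q, B (single a q 1) (single q b 1)`
    rw [Finset.sum_eq_single b (fun p _ hp => by simp [Ne.symm hp]) (by simp)]
    conv_rhs => rw [Finset.sum_eq_single a (fun p _ hp => by simp [hp]) (by simp)]
    simp

theorem sum_bilin_single_mul (Y : Matrix n n R) :
    ∑ p, ∑ q, B (single p q 1 * Y) (single q p 1)
      = ∑ p, ∑ q, B (single p q 1) (Y * single q p 1) := by
  have h := sum_bilin_mul_single B.flip Y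
  simp only [LinearMap.flip_apply] at h
  rw [Finset.sum_comm, ← h, Finset.sum_comm]

theorem sum_bilin_commutator_single (X : Matrix n n R) :
    ∑ p, ∑ q, (B (X * single p q 1 - single p q 1 * X) (single q p 1)
      + B (single p q 1) (X * single q p 1 - single q p 1 * X)) = 0 := by
  simp only [map_sub, LinearMap.sub_apply, Finset.sum_add_distrib, Finset.sum_sub_distrib,
    sum_bilin_mul_single, sum_bilin_single_mul]
  abel

theorem commute_sum_mul_single {A : Type*} [Ring A] [Algebra R A] {S : A}
    {X : Matrix n n R} {α β : Matrix n n R →ₗ[R] A}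
    (hα : ∀ M, S * α M - α M * S = α (X * M - M * X))
    (hβ : ∀ M, S * β M - β M * S = β (X * M - M * X)) :
    Commute S (∑ p, ∑ q, α (single p q 1) * β (single q p 1)) := by
  have leibniz (a b : A) :
      S * (a * b) - a * b * S = (S * a - a * S) * b + a * (S * b - b * S) := by
    noncomm_ring
  rw [Commute, SemiconjBy, ← sub_eq_zero]
  simp only [Finset.mul_sum, Finset.sum_mul, ← Finset.sum_sub_distrib, leibniz, hα, hβ]
  exact sum_bilin_commutator_single ((LinearMap.mul R A).compl₁₂ α β) X

end Casimir

theorem mul_single_one_mul (A B : Matrix n n R) (p q : n) :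
    A * single p q 1 * B = ∑ a, ∑ b, (A a p * B q b) • single a b 1 := by
  ext a b
  simp [mul_apply, sum_apply, single_apply, ite_and]

section Twist

def twist (K : Matrix n n R) : Matrix n n R →ₗ[R] Matrix n n R where
  toFun M := K * Mᵀ * K⁻¹
  map_add' _ _ := by simp [Matrix.mul_add, Matrix.add_mul]
  map_smul' _ _ := by simp

theorem twist_apply (K M : Matrix n n R) : twist K M = K * Mᵀ * K⁻¹ := rfl

variable {K : Matrix n n R} (hK : IsUnit K.det)
include hK

theorem twist_mul (A B : Matrix n n R) : twist K (A * B) = twist K B * twist K A := by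
  simp only [twist_apply, transpose_mul, Matrix.mul_assoc,
    Matrix.nonsing_inv_mul_cancel_left _ _ hK]

theorem twist_commutator {X : Matrix n n R} (hX : twist K X = -X) (M : Matrix n n R) :
    twist K (X * M - M * X) = X * twist K M - twist K M * X := by
  simp only [map_sub, twist_mul hK, hX, mul_neg, neg_mul]
  abel

theorem twist_transpose_twist (M : Matrix n n R) : twist Kᵀ (twist K M) = M := by
  rw [twist_apply, twist_apply, ← transpose_nonsing_inv, ← transpose_mul, ← transpose_mul]
  simp [Matrix.mul_assoc, hK]

theorem twist_transpose_eq_neg {X : Matrix n n R} (hX : twist K X = -X) : twist Kᵀ X = -X := by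
  calc twist Kᵀ X = twist Kᵀ (-twist K X) := by rw [hX, neg_neg]
    _ = -X := by rw [map_neg, twist_transpose_twist hK]

end Twist

end Matrix

section GaudinModel

theorem siteOp_eq_mapAt (ℓ : Fin L) (X : Matrix (Fin N) (Fin N) ℂ) :
    siteOp ρ ℓ X = PiTensorProduct.mapAt ℂ V ℓ (ρ ℓ X) := rfl

def siteOpLinear (ℓ : Fin L) : Matrix (Fin N) (Fin N) ℂ →ₗ[ℂ] Module.End ℂ (⨂[ℂ] i, V i) :=
  (PiTensorProduct.mapAt ℂ V ℓ).toLinearMap ∘ₗ ρ ℓ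

theorem siteOpLinear_apply (ℓ : Fin L) (X : Matrix (Fin N) (Fin N) ℂ) :
    siteOpLinear ρ ℓ X = siteOp ρ ℓ X := rfl

theorem Qm_apply (K : Matrix (Fin N) (Fin N) ℂ) (j : Fin L) (m i : Fin N) :
    Qm ρ K j m i = siteOp ρ j (twist Kᵀ (single i m 1)) := by
  rw [← siteOpLinear_apply, twist_apply, transpose_single, mul_single_one_mul,
    ← transpose_nonsing_inv]
  simp only [map_sum, map_smul, siteOpLinear_apply, transpose_apply]
  simp only [Qm, emb, mul_apply, map_apply, transpose_apply, Pm, of_apply,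
    Algebra.algebraMap_eq_smul_one, smul_mul_assoc, one_mul, mul_smul_comm, mul_one,
    Finset.smul_sum, smul_smul]
  rw [Finset.sum_comm]
  simp only [mul_comm]

theorem trace_Pm_mul (k : Fin L) (Q : Matrix (Fin N) (Fin N) (Module.End ℂ (⨂[ℂ] i, V i))) :
    (Pm ρ k * Q).trace = ∑ p, ∑ q, siteOp ρ k (single p q 1) * Q p q := by
  simp only [trace, diag, mul_apply, Pm, of_apply]
  exact Finset.sum_comm

variable {ρ}
variable (hρ : ∀ ℓ (X Y : Matrix (Fin N) (Fin N) ℂ),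
  ρ ℓ (X * Y - Y * X) = ρ ℓ X * ρ ℓ Y - ρ ℓ Y * ρ ℓ X)
include hρ

theorem commutator_sum_siteOp_siteOp (X A : Matrix (Fin N) (Fin N) ℂ) (j : Fin L) :
    (∑ ℓ, siteOp ρ ℓ X) * siteOp ρ j A - siteOp ρ j A * ∑ ℓ, siteOp ρ ℓ X
      = siteOp ρ j (X * A - A * X) := by
  rw [Finset.sum_mul, Finset.mul_sum, ← Finset.sum_sub_distrib, Finset.sum_eq_single j]
  · simp only [siteOp_eq_mapAt, hρ, map_sub, map_mul]
  · intro ℓ _ hℓ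
    rw [siteOp_eq_mapAt, siteOp_eq_mapAt, (PiTensorProduct.commute_mapAt hℓ _ _).eq, sub_self]
  · simp

theorem commute_sum_siteOp_trace_Pm_mul_Pm (X : Matrix (Fin N) (Fin N) ℂ) (k j : Fin L) :
    Commute (∑ ℓ, siteOp ρ ℓ X) (Pm ρ k * Pm ρ j).trace := by
  rw [trace_Pm_mul]
  exact commute_sum_mul_single (α := siteOpLinear ρ k) (β := siteOpLinear ρ j)
    (commutator_sum_siteOp_siteOp hρ X · k) (commutator_sum_siteOp_siteOp hρ X · j)

theorem commute_sum_siteOp_trace_Pm_mul_Qm {K X : Matrix (Fin N) (Fin N) ℂ}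
    (hK : IsUnit K.det) (hX : K * Xᵀ * K⁻¹ = -X) (k j : Fin L) :
    Commute (∑ ℓ, siteOp ρ ℓ X) (Pm ρ k * Qm ρ K j).trace := by
  simp only [trace_Pm_mul, Qm_apply]
  refine commute_sum_mul_single (α := siteOpLinear ρ k) (β := siteOpLinear ρ j ∘ₗ twist Kᵀ)
    (commutator_sum_siteOp_siteOp hρ X · k) (fun M => ?_)
  rw [LinearMap.comp_apply, LinearMap.comp_apply, siteOpLinear_apply, siteOpLinear_apply,
    commutator_sum_siteOp_siteOp hρ, twist_commutator (by rwa [det_transpose])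
      (twist_transpose_eq_neg hK hX)]

end GaudinModel

theorem statement16
    (hρ : ∀ ℓ (X Y : Matrix (Fin N) (Fin N) ℂ),
      ρ ℓ (X * Y - Y * X) = ρ ℓ X * ρ ℓ Y - ρ ℓ Y * ρ ℓ X)
    (z : Fin L → ℂ)
    (K : Matrix (Fin N) (Fin N) ℂ)
    (hKinv : IsUnit K.det)
    (X : Matrix (Fin N) (Fin N) ℂ) (hX : K * Xᵀ * K⁻¹ = -X)
    (k : Fin L) :
    (∑ ℓ : Fin L, siteOp ρ ℓ X) * Hout ρ z K k -
      Hout ρ z K k * (∑ ℓ : Fin L, siteOp ρ ℓ X) = 0 := by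
  have hPP := commute_sum_siteOp_trace_Pm_mul_Pm hρ X k
  have hPQ := commute_sum_siteOp_trace_Pm_mul_Qm hρ hKinv hX k
  rw [sub_eq_zero]
  exact (Commute.sum_right _ _ _ fun j _ =>
    ((hPP j).smul_right _).add_right ((hPQ j).smul_right _)).add_right ((hPQ k).smul_right _)
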